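/- arXiv:2512.11580 — 2 statements merged into one kernel-verified Lean document; each statement's English description precedes it below -/
import Mathlib

section
/- Let X₁, …, X_m be i.i.d. real random variables and let ν ∈ (0,1). Define M := max_{j≤m} |X_j| and suppose that for an independent copy X of X₁ the event {|X| > M} has probability, conditional on the sample, V := P(|X| > M | X₁,…,X_m). Then P(V > ν) ≤ (1-ν)^m. -/
/-!
The violation probability of the sample maximum exceeds `ν` only if every scenario lies in
`S = {x | ν < P(|X| > |x|)}`, so by independence the bad event has probability at most
`P(X ∈ S)^m`. Writing `F` for the distribution function of `Z = |X|`, `P(X ∈ S) = P(F(Z) < 1 - ν)`,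
and `P(F(Z) < u) ≤ u` because every compact part `K` of the lower set `{F < u}` lies below its
maximum `k`, hence has mass at most `F(k) < u`; inner regularity finishes.
-/

open MeasureTheory Set
open scoped ENNReal

section LinearOrder

variable {α : Type*} [LinearOrder α] [TopologicalSpace α] [OrderClosedTopology α]
  [MeasurableSpace α] [OpensMeasurableSpace α] (ρ : Measure α) [ρ.InnerRegular]

theorem measure_setOf_measure_Iic_lt_le (u : ℝ≥0∞) : ρ {z | ρ (Iic z) < u} ≤ u := by
  have hlower : IsLowerSet {z | ρ (Iic z) < u} := fun a b hba ha =>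
    (measure_mono (Iic_subset_Iic.2 hba)).trans_lt ha
  rw [hlower.ordConnected.measurableSet.measure_eq_iSup_isCompact ρ]
  refine iSup₂_le fun K hK => iSup_le fun hKc => ?_
  rcases K.eq_empty_or_nonempty with rfl | hne
  · simp
  obtain ⟨k, hkK, hk⟩ := hKc.exists_isGreatest hne
  exact (measure_mono fun _ ha => hk ha).trans (hK hkK).le

theorem measure_setOf_lt_measure_Ioi_le [IsProbabilityMeasure ρ] (c : ℝ≥0∞) :
    ρ {z | c < ρ (Ioi z)} ≤ 1 - c := by
  have hsurvival (z : α) : ρ (Ioi z) = 1 - ρ (Iic z) := by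
    rw [← compl_Iic, prob_compl_eq_one_sub measurableSet_Iic]
  simp only [hsurvival, lt_tsub_comm (a := c)]
  exact measure_setOf_measure_Iic_lt_le ρ (1 - c)

end LinearOrder

theorem measure_setOf_lt_measure_setOf_lt_le {Ω : Type*} [MeasurableSpace Ω] (μ : Measure Ω)
    [IsProbabilityMeasure μ] {f : Ω → ℝ} (hf : Measurable f) (c : ℝ≥0∞) :
    μ {x | c < μ {y | f x < f y}} ≤ 1 - c := by
  have : IsProbabilityMeasure (μ.map f) := Measure.isProbabilityMeasure_map hf.aemeasurable
  have hpush (x : Ω) : μ {y | f x < f y} = μ.map f (Ioi (f x)) :=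
    (Measure.map_apply hf measurableSet_Ioi).symm
  simp only [hpush]
  exact (Measure.le_map_apply hf.aemeasurable {z | c < μ.map f (Ioi z)}).trans
    (measure_setOf_lt_measure_Ioi_le _ c)

theorem scenario_violation_bound_general {m : ℕ} (hm : 0 < m)
    (μ : Measure ℝ) [IsProbabilityMeasure μ]
    (ν : ℝ) (hν : ν ∈ Set.Ioo (0 : ℝ) 1) :
    (Measure.pi fun _ : Fin m => μ)
      {xs : Fin m → ℝ |
        ν < (μ {y : ℝ | (Finset.univ.sup'
            (Finset.univ_nonempty_iff.mpr (Fin.pos_iff_nonempty.mp hm))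
            fun j => |xs j|) < |y|}).toReal} ≤
    ENNReal.ofReal ((1 - ν) ^ m) := by
  obtain ⟨hν0, hν1⟩ := hν
  set S : Set ℝ := {x | ENNReal.ofReal ν < μ {y | |x| < |y|}}
  calc _
      ≤ (Measure.pi fun _ : Fin m => μ) (univ.pi fun _ => S) := by
        refine measure_mono fun xs hxs j _ => ?_
        refine ((ENNReal.ofReal_lt_iff_lt_toReal hν0.le (measure_ne_top _ _)).2 hxs).trans_le
          (measure_mono fun y hy => ?_)
        exact (Finset.le_sup' (fun j => |xs j|) (Finset.mem_univ j)).trans_lt hy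
    _ = μ S ^ m := by simp [Measure.pi_pi]
    _ ≤ (1 - ENNReal.ofReal ν) ^ m := by
      gcongr
      exact measure_setOf_lt_measure_setOf_lt_le μ continuous_abs.measurable _
    _ = ENNReal.ofReal ((1 - ν) ^ m) := by
      rw [ENNReal.ofReal_pow (by linarith), ENNReal.ofReal_sub _ hν0.le, ENNReal.ofReal_one]

/-- Scenario-approach generalization bound for a single scalar constraint:
if `μ` is the (atomless) common law of i.i.d. scenarios `X₁, …, X_m`, the
violation probability `V(xs) = μ {y : |y| > max_j |xs j|}` of the empirical
maximum exceeds `ν` with probability at most `(1-ν)^m` over the sample. -/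
theorem scenario_violation_bound {m : ℕ} (hm : 0 < m)
    (μ : Measure ℝ) [IsProbabilityMeasure μ] (hatomless : ∀ x : ℝ, μ {x} = 0)
    (ν : ℝ) (hν : ν ∈ Set.Ioo (0 : ℝ) 1) :
    (Measure.pi fun _ : Fin m => μ)
      {xs : Fin m → ℝ |
        ν < (μ {y : ℝ | (Finset.univ.sup'
            (Finset.univ_nonempty_iff.mpr (Fin.pos_iff_nonempty.mp hm))
            fun j => |xs j|) < |y|}).toReal} ≤
    ENNReal.ofReal ((1 - ν) ^ m) :=
  scenario_violation_bound_general hm μ ν hν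
end

section
/- Let S₀ ⊆ A be nonempty and define recursively S_t := ⋂_{i ∈ I} ⋃_{a ∈ S_{t-1}} { a' ∈ A : ℓ_{t,i}(a) - L_i · d(a, a') ≥ 0 }, where ℓ_{t,i} : A → ℝ, L_i ≥ 0, and d is a metric on A. If for all t, i, a we have ℓ_{t,i}(a) ≤ h_i(a) and |h_i(a) - h_i(a')| ≤ L_i · d(a,a'), then h_i(a) ≥ 0 for every a ∈ S_t, every i ∈ I, and every t ≥ 1. -/
/-- SafeOpt-style safe sets: `S 0 = S₀` and
`S t = ⋂ i, ⋃ a ∈ S (t-1), {a' | ℓ t i a - L i * dist a a' ≥ 0}`. -/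
def safeSet {A : Type*} [MetricSpace A] {I : Type*}
    (ℓ : ℕ → I → A → ℝ) (L : I → ℝ) (S₀ : Set A) : ℕ → Set A
  | 0 => S₀
  | t + 1 => ⋂ i : I, ⋃ a ∈ safeSet ℓ L S₀ t,
      {a' : A | 0 ≤ ℓ (t + 1) i a - L i * dist a a'}

theorem mem_safeSet_succ {A : Type*} [MetricSpace A] {I : Type*}
    {ℓ : ℕ → I → A → ℝ} {L : I → ℝ} {S₀ : Set A} {t : ℕ} {a' : A} :
    a' ∈ safeSet ℓ L S₀ (t + 1) ↔
      ∀ i, ∃ a ∈ safeSet ℓ L S₀ t, 0 ≤ ℓ (t + 1) i a - L i * dist a a' := by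
  simp only [safeSet, Set.mem_iInter, Set.mem_iUnion, Set.mem_ofPred_eq, exists_prop]

theorem nonneg_of_le_sub_mul_dist_nonneg {A : Type*} [PseudoMetricSpace A]
    {f g : A → ℝ} {K : ℝ} {a b : A} (hfg : f b ≤ g b)
    (hg : |g b - g a| ≤ K * dist b a) (hb : 0 ≤ f b - K * dist b a) : 0 ≤ g a := by
  linarith [le_abs_self (g b - g a)]

theorem safeSet_safe_general {A : Type*} [MetricSpace A] {I : Type*}
    (ℓ : ℕ → I → A → ℝ) (L : I → ℝ)
    (S₀ : Set A) (h : I → A → ℝ)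
    (hlower : ∀ t i a, ℓ t i a ≤ h i a)
    (hlip : ∀ i a a', |h i a - h i a'| ≤ L i * dist a a') :
    ∀ t : ℕ, 1 ≤ t → ∀ i : I, ∀ a ∈ safeSet ℓ L S₀ t, 0 ≤ h i a := by
  rintro (_ | t) ht i a ha
  · omega
  obtain ⟨b, -, hb⟩ := mem_safeSet_succ.1 ha i
  exact nonneg_of_le_sub_mul_dist_nonneg (hlower (t + 1) i b) (hlip i b a) hb

/-- Safety of the safe set: if `ℓ t i ≤ h i` pointwise and each `h i` is
`L i`-Lipschitz w.r.t. the metric, then every point of `S t` (for `t ≥ 1`)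
satisfies all constraints: `h i a ≥ 0`. -/
theorem safeSet_safe {A : Type*} [MetricSpace A] {I : Type*}
    (ℓ : ℕ → I → A → ℝ) (L : I → ℝ) (hL : ∀ i, 0 ≤ L i)
    (S₀ : Set A) (hS₀ : S₀.Nonempty) (h : I → A → ℝ)
    (hlower : ∀ t i a, ℓ t i a ≤ h i a)
    (hlip : ∀ i a a', |h i a - h i a'| ≤ L i * dist a a') :
    ∀ t : ℕ, 1 ≤ t → ∀ i : I, ∀ a ∈ safeSet ℓ L S₀ t, 0 ≤ h i a :=
  safeSet_safe_general ℓ L S₀ h hlower hlip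
end
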